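/- arXiv:1308.2092 — 6 statements merged into one kernel-verified Lean document; each statement's English description precedes it below -/
import Mathlib

section
/- For any prime p, integer t ≥ 1, and an indeterminate y, the polynomial (1-y)^{p^t} - 1 + y^{p^t} lies in the ideal of ℤ[y] generated by the elements p^i · y^{p^{t-i}} for 1 ≤ i ≤ t. -/
/-!
Write `I t` for the ideal in question and `f t = (1 - y)^{p^t} - 1 + y^{p^t}`; note `f 0 = 0`.
Since `I t ⊆ (p)` and `p • I t ⊆ I (t + 1)`, also `I t * I t ⊆ I (t + 1)`. With `Y = y^{p^t}`,
`(1 - y)^{p^t} = (1 - Y) + f t`, and the prime binomial expansion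
`(a + b)^p = a^p + b^p + p a b r` gives
`f (t + 1) = ((1 - Y + f t)^p - (1 - Y)^p) + ((1 - Y)^p - 1 + Y^p)`,
where the first bracket lies in `p • I t + I t * I t` and the second is a multiple of `p Y`,
one of the generators of `I (t + 1)`.
-/

open Polynomial

theorem natCast_mul_dvd_one_sub_pow_sub_one_add_pow {R : Type*} [CommRing R] {p : ℕ}
    (hp : p.Prime) (q : R) : (p : R) * q ∣ (1 - q) ^ p - 1 + q ^ p := by
  obtain ⟨r, hr⟩ := exists_add_pow_prime_eq hp (1 - q) q
  rw [sub_add_cancel, one_pow] at hr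
  exact ⟨-(1 - q) * r, by linear_combination -hr⟩

noncomputable def genIdeal (p t : ℕ) : Ideal ℤ[X] :=
  Ideal.span ((fun i : ℕ => C (p : ℤ) ^ i * X ^ p ^ (t - i)) '' Set.Icc 1 t)

namespace genIdeal

variable {p t : ℕ}

theorem C_pow_mul_X_pow_mem {i : ℕ} (hi : 1 ≤ i) (hit : i ≤ t) :
    C (p : ℤ) ^ i * X ^ p ^ (t - i) ∈ genIdeal p t :=
  Ideal.subset_span ⟨i, ⟨hi, hit⟩, rfl⟩

theorem natCast_mul_X_pow_mem : (p : ℤ[X]) * X ^ p ^ t ∈ genIdeal p (t + 1) := by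
  simpa using C_pow_mul_X_pow_mem (p := p) le_rfl (Nat.le_add_left 1 t)

theorem le_span_C : genIdeal p t ≤ Ideal.span {C (p : ℤ)} := by
  refine Ideal.span_le.mpr ?_
  rintro _ ⟨i, ⟨hi, -⟩, rfl⟩
  exact Ideal.mem_span_singleton.mpr ((dvd_pow_self _ (by omega)).mul_right _)

theorem span_C_mul_le : Ideal.span {C (p : ℤ)} * genIdeal p t ≤ genIdeal p (t + 1) := by
  rw [genIdeal, Ideal.span_mul_span', Ideal.span_le]
  rintro _ ⟨_, rfl, _, ⟨i, ⟨hi, hit⟩, rfl⟩, rfl⟩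
  have hmem := C_pow_mul_X_pow_mem (p := p) (Nat.le_add_left 1 i) (Nat.add_le_add_right hit 1)
  rw [Nat.add_sub_add_right, pow_succ'] at hmem
  simpa only [mul_assoc, SetLike.mem_coe] using hmem

theorem mul_le : genIdeal p t * genIdeal p t ≤ genIdeal p (t + 1) :=
  (Ideal.mul_mono_left le_span_C).trans span_C_mul_le

theorem add_pow_sub_pow_mem (hp : p.Prime) (a : ℤ[X]) {g : ℤ[X]} (hg : g ∈ genIdeal p t) :
    (a + g) ^ p - a ^ p ∈ genIdeal p (t + 1) := by
  obtain ⟨r, hr⟩ := exists_add_pow_prime_eq hp a g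
  have hpg : C (p : ℤ) * g ∈ genIdeal p (t + 1) :=
    span_C_mul_le (Ideal.mul_mem_mul (Ideal.mem_span_singleton_self _) hg)
  have hgg : g * g ∈ genIdeal p (t + 1) := mul_le (Ideal.mul_mem_mul hg hg)
  have hgp : g ^ p = g * g * g ^ (p - 2) := by
    rw [← sq, ← pow_add, Nat.add_sub_cancel' hp.two_le]
  have hpag : (p : ℤ[X]) * a * g * r = C (p : ℤ) * g * (a * r) := by
    rw [map_natCast]
    ring
  rw [hr, add_assoc, add_sub_cancel_left, hgp, hpag]
  exact Ideal.add_mem _ (Ideal.mul_mem_right _ _ hgg) (Ideal.mul_mem_right _ _ hpg)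

end genIdeal

theorem stmt0_general (p : ℕ) (hp : p.Prime) (t : ℕ) :
    ((1 - X) ^ p ^ t - 1 + X ^ p ^ t : Polynomial ℤ) ∈
      Ideal.span ((fun i : ℕ => (C (p : ℤ)) ^ i * X ^ p ^ (t - i)) '' Set.Icc 1 t) := by
  change _ ∈ genIdeal p t
  induction t with
  | zero => simp
  | succ t ih =>
    set Y : ℤ[X] := X ^ p ^ t
    have hsplit : (1 - X) ^ p ^ (t + 1) - 1 + X ^ p ^ (t + 1) =
        ((1 - Y + ((1 - X) ^ p ^ t - 1 + Y)) ^ p - (1 - Y) ^ p) + ((1 - Y) ^ p - 1 + Y ^ p) := by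
      rw [pow_succ, pow_mul, pow_mul]
      ring
    rw [hsplit]
    refine Ideal.add_mem _ (genIdeal.add_pow_sub_pow_mem hp _ ih) ?_
    obtain ⟨c, hc⟩ := natCast_mul_dvd_one_sub_pow_sub_one_add_pow hp Y
    exact hc ▸ Ideal.mul_mem_right _ _ genIdeal.natCast_mul_X_pow_mem

/-- For any prime `p` and `t ≥ 1`, the polynomial `(1-y)^{p^t} - 1 + y^{p^t}` lies in
the ideal of `ℤ[y]` generated by `p^i * y^{p^{t-i}}` for `1 ≤ i ≤ t`. -/
theorem stmt0 (p : ℕ) (hp : p.Prime) (t : ℕ) (ht : 1 ≤ t) :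
    ((1 - X) ^ p ^ t - 1 + X ^ p ^ t : Polynomial ℤ) ∈
      Ideal.span ((fun i : ℕ => (C (p : ℤ)) ^ i * X ^ p ^ (t - i)) '' Set.Icc 1 t) :=
  stmt0_general p hp t
end

section
/- Let p be prime, n ≥ 2, b_1 ≥ 1 with p ∤ b_1, and m_2, …, m_n ≥ 0 integers. Define u_i = b_1 + p^{n-1}∑_{k=2}^i m_k and b_i = b_1 + p^n ∑_{k=2}^i p^{k-2} m_k, and C_i = u_i - b_i/p^i (with C_0 = 0). Then C_i = u_{i+1} - b_{i+1}/p^i for 0 ≤ i ≤ n-1, and the sequence C_0 < C_1 < ⋯ < C_n is strictly increasing. -/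
open Finset

section Sequences

variable {K : Type*} [Field K] (p : K) (n : ℕ) (b : K) (m : ℕ → K)

def uSeq (i : ℕ) : K := b + p ^ (n - 1) * ∑ k ∈ Icc 2 i, m k

def bSeq (i : ℕ) : K := b + p ^ n * ∑ k ∈ Icc 2 i, p ^ (k - 2) * m k

def cSeq (i : ℕ) : K := if i = 0 then 0 else uSeq p n b m i - bSeq p n b m i / p ^ i

variable {p n b m}

lemma uSeq_succ {i : ℕ} (hi : 1 ≤ i) :
    uSeq p n b m (i + 1) = uSeq p n b m i + p ^ (n - 1) * m (i + 1) := by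
  rw [uSeq, uSeq, sum_Icc_succ_top (by omega), mul_add, add_assoc]

lemma bSeq_succ {i : ℕ} (hi : 1 ≤ i) :
    bSeq p n b m (i + 1) = bSeq p n b m i + p ^ n * p ^ (i - 1) * m (i + 1) := by
  rw [bSeq, bSeq, sum_Icc_succ_top (by omega), show i + 1 - 2 = i - 1 by omega,
    mul_add, add_assoc, mul_assoc]

lemma cSeq_eq_uSeq_succ_sub (hp : p ≠ 0) (hn : 1 ≤ n) (i : ℕ) :
    cSeq p n b m i = uSeq p n b m (i + 1) - bSeq p n b m (i + 1) / p ^ i := by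
  rcases Nat.eq_zero_or_pos i with rfl | hi
  · simp [cSeq, uSeq, bSeq]
  · rw [cSeq, if_neg hi.ne', uSeq_succ hi, bSeq_succ hi]
    -- the new terms cancel: `p ^ n * p ^ (i - 1) / p ^ i = p ^ (n - 1)`
    obtain ⟨n, rfl⟩ := Nat.exists_eq_add_of_le' hn
    obtain ⟨i, rfl⟩ := Nat.exists_eq_add_of_le' hi
    simp only [Nat.add_sub_cancel]
    field_simp
    ring

end Sequences

section Monotone

variable {K : Type*} [Field K] [LinearOrder K] [IsStrictOrderedRing K] {p b : K} {n : ℕ}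
  {m : ℕ → K}

lemma bSeq_pos (hp : 0 < p) (hb : 0 < b) (hm : ∀ k, 0 ≤ m k) (i : ℕ) :
    0 < bSeq p n b m i :=
  add_pos_of_pos_of_nonneg hb <|
    mul_nonneg (pow_nonneg hp.le n) (sum_nonneg fun k _ => mul_nonneg (pow_nonneg hp.le _) (hm k))

lemma cSeq_lt_cSeq_succ (hp : 1 < p) (hn : 1 ≤ n) (hb : 0 < b) (hm : ∀ k, 0 ≤ m k) (i : ℕ) :
    cSeq p n b m i < cSeq p n b m (i + 1) := by
  have hp0 : 0 < p := zero_lt_one.trans hp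
  have hdiv : bSeq p n b m (i + 1) / p ^ (i + 1) < bSeq p n b m (i + 1) / p ^ i :=
    div_lt_div_of_pos_left (bSeq_pos hp0 hb hm _) (pow_pos hp0 i) (pow_lt_pow_right₀ hp i.lt_succ_self)
  rw [cSeq_eq_uSeq_succ_sub hp0.ne' hn, cSeq, if_neg i.succ_ne_zero]
  linarith

end Monotone

theorem stmt7_general (p : ℕ) (hp : p.Prime) (n : ℕ) (hn : 2 ≤ n) (b1 : ℕ) (hb1 : 1 ≤ b1)
    (m : ℕ → ℕ) :
    let u : ℕ → ℚ := fun i => (b1 : ℚ) + (p : ℚ) ^ (n - 1) * ∑ k ∈ Finset.Icc 2 i, (m k : ℚ)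
    let bb : ℕ → ℚ := fun i =>
      (b1 : ℚ) + (p : ℚ) ^ n * ∑ k ∈ Finset.Icc 2 i, (p : ℚ) ^ (k - 2) * (m k : ℚ)
    let C : ℕ → ℚ := fun i => if i = 0 then 0 else u i - bb i / (p : ℚ) ^ i
    (∀ i, i ≤ n - 1 → C i = u (i + 1) - bb (i + 1) / (p : ℚ) ^ i) ∧
    (∀ i, i < n → C i < C (i + 1)) := by
  intro u bb C
  have hp1 : (1 : ℚ) < p := by exact_mod_cast hp.one_lt
  have hn1 : 1 ≤ n := by omega
  have hb : (0 : ℚ) < b1 := by exact_mod_cast hb1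
  have hm : ∀ k, (0 : ℚ) ≤ m k := fun k => Nat.cast_nonneg _
  exact ⟨fun i _ => cSeq_eq_uSeq_succ_sub (zero_lt_one.trans hp1).ne' hn1 i,
    fun i _ => cSeq_lt_cSeq_succ hp1 hn1 hb hm i⟩

/-- With `u_i = b_1 + p^{n-1}∑_{k=2}^i m_k`, `b_i = b_1 + p^n ∑_{k=2}^i p^{k-2} m_k` and
`C_i = u_i - b_i/p^i` (with `C_0 = 0`), one has `C_i = u_{i+1} - b_{i+1}/p^i` for
`0 ≤ i ≤ n-1`, and the sequence `C_0 < C_1 < ⋯ < C_n` is strictly increasing. -/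
theorem stmt7 (p : ℕ) (hp : p.Prime) (n : ℕ) (hn : 2 ≤ n) (b1 : ℕ) (hb1 : 1 ≤ b1)
    (hcop : ¬ p ∣ b1) (m : ℕ → ℕ) :
    let u : ℕ → ℚ := fun i => (b1 : ℚ) + (p : ℚ) ^ (n - 1) * ∑ k ∈ Finset.Icc 2 i, (m k : ℚ)
    let bb : ℕ → ℚ := fun i =>
      (b1 : ℚ) + (p : ℚ) ^ n * ∑ k ∈ Finset.Icc 2 i, (p : ℚ) ^ (k - 2) * (m k : ℚ)
    let C : ℕ → ℚ := fun i => if i = 0 then 0 else u i - bb i / (p : ℚ) ^ i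
    (∀ i, i ≤ n - 1 → C i = u (i + 1) - bb (i + 1) / (p : ℚ) ^ i) ∧
    (∀ i, i < n → C i < C (i + 1)) :=
  stmt7_general p hp n hn b1 hb1 m
end

section
/- With u_i, b_i defined as u_i = b_1 + p^{n-1}∑_{k=2}^i m_k and b_i = b_1 + p^n ∑_{k=2}^i p^{k-2} m_k for b_1 > 0 and m_k ≥ 0, one has u_n - b_n/p^n ≥ (p-1)(u_n - b_1)/p. -/
/-!
Write `S = ∑ m_k` and `T = ∑ p^{k-2} m_k`, so that `u_n - b_1 = p^{n-1} S` and
`b_n / p^n = b_1 / p^n + T`. Since `p^{k-1} ≤ p^{n-1}` for `k ≤ n`, we have `p T ≤ p^{n-1} S`,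
and the claim reduces to `b_1 / p^n ≤ b_1`.
-/

open Finset

theorem mul_sum_Icc_two_pow_sub_two_mul_le {K : Type*} [Semiring K] [PartialOrder K]
    [IsOrderedRing K] {p : K} (hp : 1 ≤ p) (n : ℕ) (m : ℕ → K) (hm : ∀ k, 0 ≤ m k) :
    p * ∑ k ∈ Icc 2 n, p ^ (k - 2) * m k ≤ p ^ (n - 1) * ∑ k ∈ Icc 2 n, m k := by
  rw [mul_sum, mul_sum]
  refine sum_le_sum fun k hk => ?_
  obtain ⟨hk2, hkn⟩ := mem_Icc.mp hk
  calc p * (p ^ (k - 2) * m k) = p ^ (k - 1) * m k := by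
        rw [← mul_assoc, ← pow_succ']; congr 2; omega
    _ ≤ p ^ (n - 1) * m k := by gcongr; exact hm k

theorem stmt8_general (p : ℕ) (hp : 2 ≤ p) (n : ℕ) (b1 : ℕ)
    (m : ℕ → ℕ) :
    let u : ℚ := (b1 : ℚ) + (p : ℚ) ^ (n - 1) * ∑ k ∈ Finset.Icc 2 n, (m k : ℚ)
    let bb : ℚ := (b1 : ℚ) + (p : ℚ) ^ n * ∑ k ∈ Finset.Icc 2 n, (p : ℚ) ^ (k - 2) * (m k : ℚ)
    ((p : ℚ) - 1) * (u - (b1 : ℚ)) / (p : ℚ) ≤ u - bb / (p : ℚ) ^ n := by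
  intro u bb
  set S : ℚ := ∑ k ∈ Icc 2 n, (m k : ℚ)
  set T : ℚ := ∑ k ∈ Icc 2 n, (p : ℚ) ^ (k - 2) * (m k : ℚ)
  have hp1 : (1 : ℚ) ≤ p := by exact_mod_cast (by omega : 1 ≤ p)
  have hp0 : (0 : ℚ) < p := by linarith
  have hTS : p * T ≤ p ^ (n - 1) * S :=
    mul_sum_Icc_two_pow_sub_two_mul_le hp1 n _ fun k => Nat.cast_nonneg (m k)
  have hbb : bb / (p : ℚ) ^ n = b1 / (p : ℚ) ^ n + T := by
    rw [add_div, mul_div_cancel_left₀ T (by positivity)]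
  have hb1 : (b1 : ℚ) / (p : ℚ) ^ n ≤ b1 :=
    div_le_self (Nat.cast_nonneg b1) (one_le_pow₀ hp1)
  rw [hbb, div_le_iff₀ hp0]
  simp only [u]
  nlinarith [mul_le_mul_of_nonneg_left hb1 hp0.le]

/-- With `u_n = b_1 + p^{n-1}∑_{k=2}^n m_k` and `b_n = b_1 + p^n ∑_{k=2}^n p^{k-2} m_k`
for `b_1 > 0` and `m_k ≥ 0`, one has `u_n - b_n/p^n ≥ (p-1)(u_n - b_1)/p`. -/
theorem stmt8 (p : ℕ) (hp : 2 ≤ p) (n : ℕ) (hn : 1 ≤ n) (b1 : ℕ) (hb1 : 0 < b1)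
    (m : ℕ → ℕ) :
    let u : ℚ := (b1 : ℚ) + (p : ℚ) ^ (n - 1) * ∑ k ∈ Finset.Icc 2 n, (m k : ℚ)
    let bb : ℚ := (b1 : ℚ) + (p : ℚ) ^ n * ∑ k ∈ Finset.Icc 2 n, (p : ℚ) ^ (k - 2) * (m k : ℚ)
    ((p : ℚ) - 1) * (u - (b1 : ℚ)) / (p : ℚ) ≤ u - bb / (p : ℚ) ^ n :=
  stmt8_general p hp n b1 m
end

section
/- Let K be a complete discretely valued field with perfect residue field of characteristic p, and L/K a totally ramified cyclic extension of degree p with ramification break u coprime to p, generated by x with x^p - x = α ∈ K and v_L(x) = -u. If σ generates Gal(L/K) and σx = x + 1 + δ with δ ∈ 𝔪_L, then v_L(δ) = p·v_K(p) - (p-1)u. -/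
/-!
Put `t = σ x - x = 1 + δ`, a unit. Applying `σ` to `x ^ p - x` gives
`(x + t) ^ p - x ^ p - t ^ p = t - t ^ p`.
On the left the binomial term `p x ^ (p - 1) t` strictly dominates: every other middle
coefficient is divisible by `p` too, but carries a lower power of `x`, and `v x < 0`.
So the left side has valuation `v p - (p - 1) u`.
On the right, `t ^ p - t = (p - 1) δ + O(δ ^ 2)` with `p - 1` a unit, so it has valuation `v δ`.
-/

/-- `v 0` is unconstrained, so a lower bound `c ≤ v a` is stated below as `a = 0 ∨ c ≤ v a`. -/
structure IsZValuation {L : Type*} [Field L] (v : L → ℤ) : Prop where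
  map_mul : ∀ a b : L, a ≠ 0 → b ≠ 0 → v (a * b) = v a + v b
  min_le_map_add : ∀ a b : L, a ≠ 0 → b ≠ 0 → a + b ≠ 0 → min (v a) (v b) ≤ v (a + b)

namespace IsZValuation

variable {L : Type*} [Field L] {v : L → ℤ}

theorem map_one (hv : IsZValuation v) : v 1 = 0 := by
  have h := hv.map_mul 1 1 one_ne_zero one_ne_zero
  rw [mul_one] at h
  omega

theorem map_neg (hv : IsZValuation v) {a : L} (ha : a ≠ 0) : v (-a) = v a := by
  have h₁ := hv.map_mul (-1) (-1) (by norm_num) (by norm_num)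
  have h₂ := hv.map_mul (-1) a (by norm_num) ha
  rw [neg_one_mul, neg_neg, hv.map_one] at h₁
  rw [neg_one_mul] at h₂
  omega

theorem map_pow (hv : IsZValuation v) {a : L} (ha : a ≠ 0) (n : ℕ) :
    v (a ^ n) = n * v a := by
  induction n with
  | zero => simp [hv.map_one]
  | succ n ih =>
    rw [pow_succ, hv.map_mul _ _ (pow_ne_zero n ha) ha, ih]
    push_cast
    ring

theorem add_ge (hv : IsZValuation v) {a b : L} {c : ℤ} (ha : a = 0 ∨ c ≤ v a)
    (hb : b = 0 ∨ c ≤ v b) : a + b = 0 ∨ c ≤ v (a + b) := by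
  by_cases ha0 : a = 0
  · simpa [ha0] using hb
  by_cases hb0 : b = 0
  · simpa [hb0] using ha
  by_cases hab : a + b = 0
  · exact Or.inl hab
  have := hv.min_le_map_add a b ha0 hb0 hab
  have := ha.resolve_left ha0
  have := hb.resolve_left hb0
  exact Or.inr (by omega)

theorem mul_ge (hv : IsZValuation v) {a b : L} {c d : ℤ} (ha : a = 0 ∨ c ≤ v a)
    (hb : b = 0 ∨ d ≤ v b) : a * b = 0 ∨ c + d ≤ v (a * b) := by
  by_cases ha0 : a = 0
  · simp [ha0]
  by_cases hb0 : b = 0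
  · simp [hb0]
  rw [hv.map_mul a b ha0 hb0]
  exact Or.inr (add_le_add (ha.resolve_left ha0) (hb.resolve_left hb0))

theorem pow_ge (hv : IsZValuation v) {a : L} {c : ℤ} (ha : a = 0 ∨ c ≤ v a) (n : ℕ) :
    a ^ n = 0 ∨ n * c ≤ v (a ^ n) := by
  induction n with
  | zero => simp [hv.map_one]
  | succ n ih =>
    rw [pow_succ]
    convert hv.mul_ge ih ha using 2
    push_cast
    ring

theorem sum_ge (hv : IsZValuation v) {ι : Type*} (s : Finset ι) (f : ι → L) {c : ℤ}
    (h : ∀ i ∈ s, f i = 0 ∨ c ≤ v (f i)) : ∑ i ∈ s, f i = 0 ∨ c ≤ v (∑ i ∈ s, f i) :=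
  Finset.sum_induction f (fun a => a = 0 ∨ c ≤ v a) (fun _ _ => hv.add_ge) (Or.inl rfl) h

theorem natCast_ge (hv : IsZValuation v) (n : ℕ) : (n : L) = 0 ∨ 0 ≤ v n := by
  induction n with
  | zero => simp
  | succ n ih =>
    push_cast
    exact hv.add_ge ih (Or.inr hv.map_one.ge)

theorem map_add_of_lt (hv : IsZValuation v) {a b : L} (ha : a ≠ 0) (hb : b = 0 ∨ v a < v b) :
    a + b ≠ 0 ∧ v (a + b) = v a := by
  by_cases hb0 : b = 0
  · simpa [hb0] using ha
  replace hb := hb.resolve_left hb0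
  have hab : a + b ≠ 0 := by
    intro h
    rw [eq_neg_of_add_eq_zero_right h, hv.map_neg ha] at hb
    exact hb.false
  refine ⟨hab, ?_⟩
  have h₁ := hv.min_le_map_add a b ha hb0 hab
  have h₂ := hv.min_le_map_add (a + b) (-b) hab (neg_ne_zero.mpr hb0) (by simpa using ha)
  rw [add_neg_cancel_right, hv.map_neg hb0] at h₂
  omega

theorem map_one_add (hv : IsZValuation v) {b : L} (hb : b = 0 ∨ 0 < v b) :
    1 + b ≠ 0 ∧ v (1 + b) = 0 := by
  rw [← hv.map_one]
  exact hv.map_add_of_lt one_ne_zero (by rwa [hv.map_one])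

theorem one_add_pow_sub_ge (hv : IsZValuation v) {δ : L} (hδ : 0 ≤ v δ) (n : ℕ) :
    (1 + δ) ^ n - 1 - n * δ = 0 ∨ 2 * v δ ≤ v ((1 + δ) ^ n - 1 - n * δ) := by
  have hunit : 1 + δ = 0 ∨ 0 ≤ v (1 + δ) := hv.add_ge (Or.inr hv.map_one.ge) (Or.inr hδ)
  induction n with
  | zero => simp
  | succ n ih =>
    have hsq : (n : L) * δ ^ 2 = 0 ∨ 2 * v δ ≤ v (n * δ ^ 2) := by
      simpa using hv.mul_ge (hv.natCast_ge n) (hv.pow_ge (Or.inr le_rfl : δ = 0 ∨ v δ ≤ v δ) 2)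
    have hstep : (1 + δ) ^ (n + 1) - 1 - ((n + 1 : ℕ) : L) * δ
        = (1 + δ) * ((1 + δ) ^ n - 1 - n * δ) + n * δ ^ 2 := by
      push_cast; ring
    rw [hstep]
    exact hv.add_ge (by simpa using hv.mul_ge hunit ih) hsq

theorem map_one_add_pow_sub_one_add (hv : IsZValuation v) {δ : L} (hδ0 : δ ≠ 0) (hδ : 0 < v δ)
    {n : ℕ} (hn : 0 < v (n : L)) :
    (1 + δ) ^ n - (1 + δ) ≠ 0 ∧ v ((1 + δ) ^ n - (1 + δ)) = v δ := by
  obtain ⟨hunit0, hunit⟩ : 1 + -(n : L) ≠ 0 ∧ v (1 + -(n : L)) = 0 := by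
    refine hv.map_one_add ?_
    by_cases hn0 : (n : L) = 0
    · simp [hn0]
    · rwa [hv.map_neg hn0, or_iff_right (neg_ne_zero.mpr hn0)]
  have hlead0 : (1 + -(n : L)) * -δ ≠ 0 := mul_ne_zero hunit0 (neg_ne_zero.mpr hδ0)
  have hlead : v ((1 + -(n : L)) * -δ) = v δ := by
    rw [hv.map_mul _ _ hunit0 (neg_ne_zero.mpr hδ0), hunit, hv.map_neg hδ0, zero_add]
  rw [show (1 + δ) ^ n - (1 + δ) = (1 + -(n : L)) * -δ + ((1 + δ) ^ n - 1 - n * δ) by ring,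
    ← hlead]
  exact hv.map_add_of_lt hlead0 ((hv.one_add_pow_sub_ge hδ.le n).imp_right (by omega))

theorem map_add_pow_sub_pow_sub_pow (hv : IsZValuation v) {p : ℕ} (hp : p.Prime)
    (hpL : (p : L) ≠ 0) {x t : L} (hx0 : x ≠ 0) (hx : v x < 0) (ht0 : t ≠ 0) (ht : v t = 0) :
    (x + t) ^ p - x ^ p - t ^ p ≠ 0 ∧
      v ((x + t) ^ p - x ^ p - t ^ p) = v (p : L) + (p - 1) * v x := by
  have hp2 := hp.two_le
  set T : ℕ → L := fun i => x ^ i * t ^ (p - i) * (p.choose i : L)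
  set S := (((Finset.range (p + 1)).erase p).erase 0).erase (p - 1)
  have hexp : (x + t) ^ p - x ^ p - t ^ p = T (p - 1) + ∑ i ∈ S, T i := by
    rw [add_pow, ← Finset.add_sum_erase _ _ (by simp : p ∈ Finset.range (p + 1)),
      ← Finset.add_sum_erase _ _ (by simp; omega : 0 ∈ (Finset.range (p + 1)).erase p),
      ← Finset.add_sum_erase _ _
        (by simp; omega : p - 1 ∈ ((Finset.range (p + 1)).erase p).erase 0)]
    simp only [T, tsub_self, tsub_zero, pow_zero, mul_one, one_mul, Nat.choose_self,
      Nat.choose_zero_right, Nat.cast_one]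
    ring
  have hTlead : T (p - 1) = x ^ (p - 1) * t * p := by
    simp only [T, Nat.sub_sub_self hp.one_le, pow_one, Nat.choose_symm hp.one_le,
      Nat.choose_one_right]
  have hlead0 : T (p - 1) ≠ 0 := hTlead ▸ mul_ne_zero (mul_ne_zero (pow_ne_zero _ hx0) ht0) hpL
  have hlead : v (T (p - 1)) = v (p : L) + (p - 1) * v x := by
    rw [hTlead, hv.map_mul _ _ (mul_ne_zero (pow_ne_zero _ hx0) ht0) hpL,
      hv.map_mul _ _ (pow_ne_zero _ hx0) ht0, hv.map_pow hx0, ht, Nat.cast_sub hp.one_le]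
    push_cast
    ring
  have hrest : ∀ i ∈ S, T i = 0 ∨ v (T (p - 1)) + 1 ≤ v (T i) := by
    intro i hi
    simp only [S, Finset.mem_erase, Finset.mem_range] at hi
    obtain ⟨m, hm⟩ := hp.dvd_choose_self hi.2.1 (by omega)
    have hTi := hv.mul_ge
      (hv.mul_ge (Or.inr (hv.map_pow hx0 i).ge) (hv.pow_ge (Or.inr ht.ge) (p - i)))
      (hv.mul_ge (Or.inr le_rfl : (p : L) = 0 ∨ v (p : L) ≤ v (p : L)) (hv.natCast_ge m))
    rw [← Nat.cast_mul, ← hm] at hTi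
    refine hTi.imp_right (le_trans ?_)
    have hi' : (i : ℤ) + 1 ≤ p - 1 := by omega
    rw [hlead]
    nlinarith
  rw [hexp, ← hlead]
  exact hv.map_add_of_lt hlead0 ((hv.sum_ge S T hrest).imp_right (by omega))

end IsZValuation

theorem stmt9_general (p : ℕ) (hp : p.Prime) (L : Type*) [Field L]
    (v : L → ℤ)
    (hmul : ∀ a b : L, a ≠ 0 → b ≠ 0 → v (a * b) = v a + v b)
    (hadd : ∀ a b : L, a ≠ 0 → b ≠ 0 → a + b ≠ 0 → min (v a) (v b) ≤ v (a + b))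
    (σ : L ≃+* L)
    (x δ : L) (u : ℕ) (hu : 0 < u)
    (hpL : (p : L) ≠ 0)
    (hx0 : x ≠ 0) (hvx : v x = -(u : ℤ))
    (hbound : ((p : ℤ) - 1) * u < v (p : L))
    (hfix : σ (x ^ p - x) = x ^ p - x)
    (hσx : σ x = x + 1 + δ)
    (hδ : δ = 0 ∨ 1 ≤ v δ) :
    δ ≠ 0 ∧ v δ = v (p : L) - ((p : ℤ) - 1) * u := by
  have hv : IsZValuation v := ⟨hmul, hadd⟩
  have hvp : 0 < v (p : L) := by
    have : (1 : ℤ) ≤ p - 1 := by have := hp.two_le; omega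
    nlinarith
  obtain ⟨ht0, hvt⟩ := hv.map_one_add (hδ.imp_right (by omega) : δ = 0 ∨ 0 < v δ)
  have hAS : (x + (1 + δ)) ^ p - x ^ p - (1 + δ) ^ p = -((1 + δ) ^ p - (1 + δ)) := by
    rw [map_sub, map_pow, hσx] at hfix
    linear_combination hfix
  obtain ⟨hne, hval⟩ := hv.map_add_pow_sub_pow_sub_pow hp hpL hx0 (by omega) ht0 hvt
  rw [hAS, neg_ne_zero] at hne
  have hδ0 : δ ≠ 0 := by
    rintro rfl
    simp at hne
  have hvδ0 : 0 < v δ := by have := hδ.resolve_left hδ0; omega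
  obtain ⟨-, hvδ⟩ := hv.map_one_add_pow_sub_one_add hδ0 hvδ0 hvp
  rw [hAS, hv.map_neg hne, hvδ, hvx] at hval
  exact ⟨hδ0, by linarith⟩

/-- Let `L/K` be a totally ramified cyclic extension of degree `p` in residue
characteristic `p`, with ramification break `u` coprime to `p`, generated by `x` with
`x^p - x = α ∈ K` and `v_L(x) = -u`, where `-p v_K(p)/(p-1) < v_L(x) < 0`.  If `σ`
generates `Gal(L/K)` and `σ x = x + 1 + δ` with `δ ∈ 𝔪_L`, then
`v_L(δ) = p v_K(p) - (p-1)u` (note `v_L(p) = p v_K(p)` since `L/K` is totally ramified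
of degree `p`).  The normalized valuation `v_L` is encoded abstractly by the
multiplicative/ultrametric/Galois-invariance hypotheses below. -/
theorem stmt9 (p : ℕ) (hp : p.Prime) (L : Type*) [Field L]
    (v : L → ℤ)
    (hmul : ∀ a b : L, a ≠ 0 → b ≠ 0 → v (a * b) = v a + v b)
    (hadd : ∀ a b : L, a ≠ 0 → b ≠ 0 → a + b ≠ 0 → min (v a) (v b) ≤ v (a + b))
    (hsurj : ∀ mz : ℤ, ∃ a : L, a ≠ 0 ∧ v a = mz)
    (σ : L ≃+* L) (horder : orderOf σ = p)
    (hσv : ∀ a : L, a ≠ 0 → v (σ a) = v a)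
    (x δ : L) (u : ℕ) (hu : 0 < u) (hcop : ¬ p ∣ u)
    (hpL : (p : L) ≠ 0)
    (hx0 : x ≠ 0) (hvx : v x = -(u : ℤ))
    (hbound : ((p : ℤ) - 1) * u < v (p : L))
    (hfix : σ (x ^ p - x) = x ^ p - x)
    (hσx : σ x = x + 1 + δ)
    (hδ : δ = 0 ∨ 1 ≤ v δ) :
    δ ≠ 0 ∧ v δ = v (p : L) - ((p : ℤ) - 1) * u :=
  stmt9_general p hp L v hmul hadd σ x δ u hu hpL hx0 hvx hbound hfix hσx hδ
end

section
/- Let K₀ be a complete discretely valued field of characteristic 0 with perfect residue field of characteristic p, containing 𝔽_{p^n} in its residue field. Suppose K_n = K₀(x) where x^{p^n} - x = τ ∈ K₀ with v₀(τ) > -p^n v₀(p)/(p^n - 1), v₀(τ) = -u < 0, gcd(u, p) = 1. Let ω ∈ 𝒪₀ be a Teichmüller representative (ω^{p^n} = ω). Then the polynomial f(y) = (S + y)^p - (S + y) - ωτ, where S = ∑_{r=0}^{n-1} (ωx)^{p^r}, satisfies f(y) ≡ y^p - y modulo the maximal ideal of 𝒪_{K_n}, and hence has p roots in K_n. -/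
/-!
Extend `v` by `v 0 = ⊤` to an additive valuation `w` and put `t r = (ωx)^(p^r)`, so that
`S = ∑_{r<n} t r`. As `ω^(p^n) = ω` and `x^(p^n) - x = τ`, the sum `∑ t r ^ p - ∑ t r` telescopes
to `ωτ`, hence the constant coefficient of `f - (Y^p - Y)` is `S^p - ∑ t r ^ p`; the others are
`(p choose k) S^(p-k)`. Both are divisible by `p` in a ring where `w (t r) ≥ -p^r u` (from
`w x ≥ -u`), and `w p > (p^n - 1) u` outweighs all these poles, so every coefficient lies in the
maximal ideal. Thus `f` reduces to `Y^p - Y` over the residue field, whose `p` roots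
`0, 1, …, p - 1` are simple, and Hensel's lemma lifts them to `p` distinct roots in `O`.
-/

open Polynomial IsLocalRing

section IntValued

variable {F : Type*} [Field F] (v : F → ℤ)

theorem map_one_eq_zero_of_map_mul (hmul : ∀ a b : F, a ≠ 0 → b ≠ 0 → v (a * b) = v a + v b) :
    v 1 = 0 := by
  have h := hmul 1 1 one_ne_zero one_ne_zero
  rw [one_mul] at h
  omega

variable (hmul : ∀ a b : F, a ≠ 0 → b ≠ 0 → v (a * b) = v a + v b)
  (hadd : ∀ a b : F, a ≠ 0 → b ≠ 0 → a + b ≠ 0 → min (v a) (v b) ≤ v (a + b))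

open Classical in
noncomputable def intAddValuation : AddValuation F (WithTop ℤ) :=
  AddValuation.of (fun z => if z = 0 then ⊤ else (v z : WithTop ℤ)) (if_pos rfl)
    (by simp [map_one_eq_zero_of_map_mul v hmul])
    (by
      intro a b
      by_cases ha : a = 0; · simp [ha]
      by_cases hb : b = 0; · simp [hb]
      by_cases hab : a + b = 0; · simp [hab]
      simp only [ha, hb, hab, if_false]
      exact_mod_cast hadd a b ha hb hab)
    (by
      intro a b
      by_cases ha : a = 0; · simp [ha]
      by_cases hb : b = 0; · simp [hb]
      simp only [mul_eq_zero, ha, hb, or_self, if_false]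
      exact_mod_cast hmul a b ha hb)

theorem intAddValuation_apply {z : F} (hz : z ≠ 0) : intAddValuation v hmul hadd z = v z :=
  if_neg hz

theorem intAddValuation_nonneg_iff {z : F} :
    0 ≤ intAddValuation v hmul hadd z ↔ z = 0 ∨ 0 ≤ v z := by
  by_cases hz : z = 0
  · simp [hz]
  · simp [intAddValuation_apply v hmul hadd hz, hz]

theorem intAddValuation_pos_iff {z : F} :
    0 < intAddValuation v hmul hadd z ↔ z = 0 ∨ 0 < v z := by
  by_cases hz : z = 0
  · simp [hz]
  · simp [intAddValuation_apply v hmul hadd hz, hz]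

end IntValued

theorem sum_range_pow_pow_pow_sub_sum {R : Type*} [CommRing R] (y : R) (p n : ℕ) :
    ∑ r ∈ Finset.range n, (y ^ p ^ r) ^ p - ∑ r ∈ Finset.range n, y ^ p ^ r = y ^ p ^ n - y := by
  simp_rw [← pow_mul, ← pow_succ]
  rw [← Finset.sum_sub_distrib, Finset.sum_range_sub (fun r => y ^ p ^ r), pow_zero, pow_one]

theorem coeff_C_add_X_pow_sub_sub_C_sub {R : Type*} [CommRing R] (s c : R) (p m : ℕ) (hp : 1 < p) :
    ((C s + X) ^ p - (C s + X) - C c - (X ^ p - X)).coeff m =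
      if m = 0 then s ^ p - s - c else if m < p then s ^ (p - m) * (p.choose m : R) else 0 := by
  rw [add_comm (C s)]
  simp only [coeff_sub, coeff_add, coeff_X_add_C_pow, coeff_X_pow, coeff_C, coeff_X]
  rcases Nat.lt_trichotomy m p with h | rfl | h
  · split_ifs <;> simp_all
  · split_ifs <;> simp_all
  · split_ifs <;> simp_all [Nat.choose_eq_zero_of_lt h]

theorem monic_C_add_X_pow_sub_sub_C {R : Type*} [CommRing R] [Nontrivial R] (s c : R) {p : ℕ}
    (hp : 1 < p) : ((C s + X) ^ p - (C s + X) - C c).Monic := by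
  rw [add_comm (C s), sub_sub]
  refine ((monic_X_add_C s).pow p).sub_of_left ?_
  rw [degree_eq_natDegree ((monic_X_add_C s).pow p).ne_zero, natDegree_pow_X_add_C]
  refine (degree_add_le _ _).trans_lt (max_lt ((degree_X_add_C s).trans_lt ?_)
    (degree_C_le.trans_lt ?_)) <;> exact_mod_cast (by omega : _)

namespace AddValuation

variable {R : Type*} [CommRing R] (w : AddValuation R (WithTop ℤ))

theorem coe_le_map_mul {a b : R} {α β : ℤ} (ha : (α : WithTop ℤ) ≤ w a)
    (hb : (β : WithTop ℤ) ≤ w b) : ((α + β : ℤ) : WithTop ℤ) ≤ w (a * b) := by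
  rw [map_mul, WithTop.coe_add]
  exact add_le_add ha hb

theorem coe_le_map_pow {a : R} {α : ℤ} (ha : (α : WithTop ℤ) ≤ w a) (k : ℕ) :
    ((k * α : ℤ) : WithTop ℤ) ≤ w (a ^ k) := by
  rw [map_pow, ← nsmul_eq_mul, WithTop.coe_nsmul]
  exact nsmul_le_nsmul_right ha k

theorem map_natCast_nonneg (k : ℕ) : 0 ≤ w (k : R) := by
  induction k with
  | zero => simp
  | succ k ih =>
    rw [Nat.cast_succ]
    exact le_trans (le_min ih (by simp)) (w.map_add _ _)

theorem map_natCast_le_of_dvd {k m : ℕ} (h : k ∣ m) : w (k : R) ≤ w (m : R) := by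
  obtain ⟨c, rfl⟩ := h
  rw [Nat.cast_mul, map_mul]
  exact le_add_of_nonneg_right (w.map_natCast_nonneg c)

theorem map_pow_lt_of_neg {a : R} {e : ℤ} (ha : w a = e) (he : e < 0) {N : ℕ} (hN : 2 ≤ N) :
    w (a ^ N) = ((N * e : ℤ) : WithTop ℤ) ∧ w (a ^ N) < w a := by
  have h : w (a ^ N) = ((N * e : ℤ) : WithTop ℤ) := by
    rw [map_pow, ha, ← WithTop.coe_nsmul, nsmul_eq_mul]
  refine ⟨h, ?_⟩
  rw [h, ha, WithTop.coe_lt_coe]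
  have : (2 : ℤ) ≤ N := by exact_mod_cast hN
  nlinarith

theorem nonneg_of_pow_eq_self {a : R} {N : ℕ} (hN : 2 ≤ N) (h : a ^ N = a) : 0 ≤ w a := by
  by_contra! hneg
  obtain ⟨e, hae, he⟩ := WithTop.lt_iff_exists_coe.mp hneg
  have := (w.map_pow_lt_of_neg hae (by exact_mod_cast he) hN).2
  rw [h] at this
  exact lt_irrefl _ this

theorem coe_le_of_coe_le_map_pow_sub_self {a : R} {c : ℤ} (hc : c ≤ 0) {N : ℕ} (hN : 2 ≤ N)
    (h : ((N * c : ℤ) : WithTop ℤ) ≤ w (a ^ N - a)) : (c : WithTop ℤ) ≤ w a := by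
  by_contra! hlt
  obtain ⟨e, hae, hec⟩ := WithTop.lt_iff_exists_coe.mp hlt
  have hec : e < c := WithTop.coe_lt_coe.mp hec
  obtain ⟨hpow, hpow_lt⟩ := w.map_pow_lt_of_neg hae (hec.trans_le hc) hN
  rw [w.map_sub_eq_of_lt_left hpow_lt, hpow, WithTop.coe_le_coe] at h
  have : (2 : ℤ) ≤ N := by exact_mod_cast hN
  nlinarith

theorem coe_le_map_mul_pow {ω x : R} {u : ℤ} (hu : 0 ≤ u) {N : ℕ} (hN : 2 ≤ N) (hω : ω ^ N = ω)
    (hx : ((N * -u : ℤ) : WithTop ℤ) ≤ w (x ^ N - x)) (k : ℕ) :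
    ((-(k * u) : ℤ) : WithTop ℤ) ≤ w ((ω * x) ^ k) := by
  have hωx := w.coe_le_map_mul (w.nonneg_of_pow_eq_self hN hω)
    (w.coe_le_of_coe_le_map_pow_sub_self (by omega) hN hx)
  simpa using w.coe_le_map_pow hωx k

variable {p : ℕ} [hp : Fact p.Prime]

theorem coe_le_map_add_pow_sub_pow_sub_pow {a b : R} {α β γ : ℤ} (hβα : β ≤ α)
    (ha : (α : WithTop ℤ) ≤ w a) (hb : (β : WithTop ℤ) ≤ w b) (hγ : (γ : WithTop ℤ) ≤ w p) :
    ((γ + (α + (p - 1) * β) : ℤ) : WithTop ℤ) ≤ w ((a + b) ^ p - a ^ p - b ^ p) := by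
  rw [add_pow_prime_eq' hp.out, show ∀ x y z : R, x + y + z - x - y = z by intros; ring]
  refine w.coe_le_map_mul hγ (w.map_le_sum fun k hk => ?_)
  obtain ⟨hk0, hkp⟩ := Finset.mem_Ioo.mp hk
  have hterm := w.coe_le_map_mul (w.coe_le_map_mul (w.coe_le_map_pow ha k)
    (w.coe_le_map_pow hb (p - k))) (w.map_natCast_nonneg (p.choose k / p))
  refine le_trans (WithTop.coe_le_coe.mpr ?_) hterm
  push_cast [hkp.le]
  have : (1 : ℤ) ≤ k := by exact_mod_cast hk0
  nlinarith [mul_nonneg (sub_nonneg.mpr this) (sub_nonneg.mpr hβα)]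

theorem coe_le_map_sum_range_succ {t : ℕ → R} {u : ℤ} (hu : 0 ≤ u)
    (ht : ∀ r, ((-(p ^ r * u) : ℤ) : WithTop ℤ) ≤ w (t r)) (m : ℕ) :
    ((-(p ^ m * u) : ℤ) : WithTop ℤ) ≤ w (∑ r ∈ Finset.range (m + 1), t r) := by
  refine w.map_le_sum fun r hr => le_trans (WithTop.coe_le_coe.mpr ?_) (ht r)
  have : (p : ℤ) ^ r ≤ (p : ℤ) ^ m :=
    pow_le_pow_right₀ (by exact_mod_cast hp.out.one_le)
      (Nat.lt_succ_iff.mp (Finset.mem_range.mp hr))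
  nlinarith

theorem pos_map_sum_pow_sub_sum_pow {t : ℕ → R} {u γ : ℤ} {n : ℕ} (hu : 0 ≤ u)
    (ht : ∀ r, ((-(p ^ r * u) : ℤ) : WithTop ℤ) ≤ w (t r)) (hγ : (γ : WithTop ℤ) ≤ w p)
    (hγu : ((p : ℤ) ^ n - 1) * u < γ) {m : ℕ} (hmn : m ≤ n) :
    0 < w ((∑ r ∈ Finset.range m, t r) ^ p - ∑ r ∈ Finset.range m, t r ^ p) := by
  induction m with
  | zero => simp [hp.out.ne_zero]
  | succ m ih =>
    rw [Finset.sum_range_succ, Finset.sum_range_succ,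
      show ∀ A B c : R, (A + c) ^ p - (B + c ^ p) = (A ^ p - B) + ((A + c) ^ p - A ^ p - c ^ p)
        by intros; ring]
    refine lt_of_lt_of_le (lt_min (ih (by omega)) ?_) (w.map_add _ _)
    cases m with
    | zero => simp [hp.out.ne_zero]
    | succ m =>
      -- The new cross terms have valuation `≥ w p - (p^m + (p-1) p^(m+1)) u`,
      -- and `p^m + (p-1) p^(m+1) ≤ p^(m+2) - 1 ≤ p^n - 1`.
      refine lt_of_lt_of_le (WithTop.coe_lt_coe.mpr ?_) (w.coe_le_map_add_pow_sub_pow_sub_pow ?_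
        (w.coe_le_map_sum_range_succ hu ht m) (ht (m + 1)) hγ)
      · have hp2 : (2 : ℤ) ≤ p := by exact_mod_cast hp.out.two_le
        have hq : (1 : ℤ) ≤ (p : ℤ) ^ m := one_le_pow₀ (by omega)
        have hpn : (p : ℤ) ^ m * p * p ≤ (p : ℤ) ^ n := by
          rw [← pow_succ, ← pow_succ]
          exact pow_le_pow_right₀ (by omega) hmn
        have hslack : (0 : ℤ) ≤ (p : ℤ) ^ m * (p - 1) - 1 := by nlinarith
        rw [pow_succ]
        nlinarith [mul_nonneg hu hslack]
      · have : (p : ℤ) ^ m ≤ (p : ℤ) ^ (m + 1) :=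
          pow_le_pow_right₀ (by exact_mod_cast hp.out.one_le) (Nat.le_succ m)
        nlinarith

theorem pos_map_sum_range_pow_mul_choose {t : ℕ → R} {u γ : ℤ} {n : ℕ} (hu : 0 ≤ u)
    (ht : ∀ r, ((-(p ^ r * u) : ℤ) : WithTop ℤ) ≤ w (t r)) (hγ : (γ : WithTop ℤ) ≤ w p)
    (hγu : ((p : ℤ) ^ (n + 1) - 1) * u < γ) {k : ℕ} (hk0 : 0 < k) (hkp : k < p) :
    0 < w ((∑ r ∈ Finset.range (n + 1), t r) ^ (p - k) * (p.choose k : R)) := by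
  have hchoose := hγ.trans (w.map_natCast_le_of_dvd (hp.out.dvd_choose_self hk0.ne' hkp))
  refine lt_of_lt_of_le (WithTop.coe_lt_coe.mpr ?_)
    (w.coe_le_map_mul (w.coe_le_map_pow (w.coe_le_map_sum_range_succ hu ht n) (p - k)) hchoose)
  have hq : (1 : ℤ) ≤ (p : ℤ) ^ n := one_le_pow₀ (by exact_mod_cast hp.out.one_le)
  have hk : (1 : ℤ) ≤ k := by exact_mod_cast hk0
  push_cast [hkp.le]
  rw [pow_succ] at hγu
  have h1 : 0 ≤ u * ((p : ℤ) ^ n - 1) := mul_nonneg hu (sub_nonneg.mpr hq)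
  have h2 : 0 ≤ u * (p : ℤ) ^ n * (k - 1) :=
    mul_nonneg (mul_nonneg hu (by positivity)) (sub_nonneg.mpr hk)
  nlinarith

theorem pos_map_coeff_C_add_X_pow_sub_sub_C_sub {t : ℕ → R} {u γ : ℤ} {n : ℕ} {c : R}
    (hu : 0 ≤ u) (ht : ∀ r, ((-(p ^ r * u) : ℤ) : WithTop ℤ) ≤ w (t r))
    (hγ : (γ : WithTop ℤ) ≤ w p) (hγu : ((p : ℤ) ^ (n + 1) - 1) * u < γ)
    (hc : ∑ r ∈ Finset.range (n + 1), t r ^ p = ∑ r ∈ Finset.range (n + 1), t r + c) (m : ℕ) :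
    let s := ∑ r ∈ Finset.range (n + 1), t r
    0 < w (((C s + X) ^ p - (C s + X) - C c - (X ^ p - X)).coeff m) := by
  intro s
  rw [coeff_C_add_X_pow_sub_sub_C_sub _ _ _ _ hp.out.one_lt]
  split_ifs with hm0 hmp
  · rw [show s ^ p - s - c = s ^ p - ∑ r ∈ Finset.range (n + 1), t r ^ p by rw [hc]; ring]
    exact w.pos_map_sum_pow_sub_sum_pow hu ht hγ hγu le_rfl
  · exact w.pos_map_sum_range_pow_mul_choose hu ht hγ hγu (Nat.pos_of_ne_zero hm0) hmp
  · simp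

end AddValuation

theorem HenselianLocalRing.exists_finset_roots_of_map_residue_eq_X_pow_sub_X {R : Type*}
    [CommRing R] [HenselianLocalRing R] {p : ℕ} [Fact p.Prime] [CharP (ResidueField R) p]
    {F : R[X]} (hF : F.Monic) (hmap : F.map (residue R) = X ^ p - X) :
    ∃ T : Finset R, T.card = p ∧ ∀ z ∈ T, F.IsRoot z := by
  have hens := ((HenselianLocalRing.TFAE R).out 0 1).mp (inferInstance : HenselianLocalRing R)
  let ι : ZMod p →+* ResidueField R := ZMod.castHom dvd_rfl _
  have hlift : ∀ a : ZMod p, ∃ z : R, F.IsRoot z ∧ residue R z = ι a := by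
    intro a
    refine hens F hF (ι a) ?_ ?_
    · rw [aeval_def, eval₂_eq_eval_map, ResidueField.algebraMap_eq, hmap]
      simp [← map_pow, ZMod.pow_card]
    · rw [aeval_def, eval₂_eq_eval_map, ResidueField.algebraMap_eq, ← derivative_map, hmap]
      simp [derivative_X_pow]
  choose r hr using hlift
  have hinj : Function.Injective r := fun a b hab =>
    ι.injective (by rw [← (hr a).2, ← (hr b).2, hab])
  exact ⟨Finset.univ.map ⟨r, hinj⟩, by simp, by simpa using fun a => (hr a).1⟩

theorem ValuationSubring.mem_maximalIdeal_of_pos {L : Type*} [Field L]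
    {w : AddValuation L (WithTop ℤ)} {O : ValuationSubring L} (hO : ∀ z, z ∈ O ↔ 0 ≤ w z)
    {a : O} (ha : 0 < w a) : a ∈ maximalIdeal O := by
  intro hunit
  obtain ⟨b, hab⟩ := isUnit_iff_exists_inv.mp hunit
  have h : w a + w b = 0 := by
    rw [← w.map_mul, ← w.map_one]
    exact congrArg (fun z : O => w z) hab
  exact (add_pos_of_pos_of_nonneg ha ((hO b).mp b.2)).ne' h

theorem ValuationSubring.exists_finset_roots_of_coeff_sub_X_pow_sub_X_pos {L : Type*} [Field L]
    (w : AddValuation L (WithTop ℤ)) (O : ValuationSubring L) [HenselianLocalRing O]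
    {p : ℕ} [Fact p.Prime] [CharP (ResidueField O) p] (hO : ∀ z, z ∈ O ↔ 0 ≤ w z)
    {f : L[X]} (hf : f.Monic) (hcoeff : ∀ m, 0 < w ((f - (X ^ p - X)).coeff m)) :
    ∃ T : Finset L, T.card = p ∧ ∀ z ∈ T, f.IsRoot z := by
  have hXO : ∀ m, (X ^ p - X : L[X]).coeff m ∈ O := fun m => by
    have : (X ^ p - X : L[X]) = (X ^ p - X : ℤ[X]).map (Int.castRingHom L) := by simp
    rw [this, coeff_map]
    exact intCast_mem O _
  have hfO : (f.coeffs : Set L) ⊆ O.toSubring := fun c hc => by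
    obtain ⟨m, -, rfl⟩ := mem_coeffs_iff.mp hc
    rw [← sub_add_cancel f (X ^ p - X), coeff_add]
    exact O.add_mem _ _ ((hO _).mpr (hcoeff m).le) (hXO m)
  set F : O[X] := f.toSubring O.toSubring hfO
  have hFf : F.map (algebraMap O L) = f := map_toSubring f O.toSubring hfO
  have hmap : F.map (residue O) = X ^ p - X := by
    rw [← sub_eq_zero, ← Polynomial.map_X (residue O), ← Polynomial.map_pow, ← Polynomial.map_sub,
      ← Polynomial.map_sub]
    ext m
    rw [coeff_map, coeff_zero, residue_eq_zero_iff]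
    refine ValuationSubring.mem_maximalIdeal_of_pos hO ?_
    convert hcoeff m using 2
    rw [← hFf, ← Polynomial.map_X (algebraMap O L), ← Polynomial.map_pow, ← Polynomial.map_sub,
      ← Polynomial.map_sub, coeff_map]
    rfl
  obtain ⟨T, hT, hroots⟩ := HenselianLocalRing.exists_finset_roots_of_map_residue_eq_X_pow_sub_X
    ((monic_toSubring f O.toSubring hfO).mpr hf) hmap
  refine ⟨T.map (Function.Embedding.subtype _), by simpa using hT, ?_⟩
  simp only [Finset.mem_map, Function.Embedding.subtype_apply, forall_exists_index, and_imp]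
  rintro _ z hz rfl
  rw [← hFf]
  exact (hroots z hz).map

theorem stmt14_general (p n : ℕ) (hp : p.Prime) (hn : 1 ≤ n)
    (K L : Type*) [Field K] [Field L] [Algebra K L]
    (vK : K → ℤ) (v : L → ℤ)
    (hmul : ∀ a b : L, a ≠ 0 → b ≠ 0 → v (a * b) = v a + v b)
    (hadd : ∀ a b : L, a ≠ 0 → b ≠ 0 → a + b ≠ 0 → min (v a) (v b) ≤ v (a + b))
    (hext : ∀ a : K, a ≠ 0 → v (algebraMap K L a) = p ^ n * vK a)
    (O : ValuationSubring L) [HenselianLocalRing O]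
    (hO : ∀ z : L, z ∈ O ↔ z = 0 ∨ 0 ≤ v z)
    (hres : CharP (IsLocalRing.ResidueField O) p)
    (τ : K) (x : L) (u : ℕ)
    (hτ0 : τ ≠ 0) (hvτ : vK τ = -(u : ℤ))
    (hx : x ^ p ^ n - x = algebraMap K L τ)
    (hKp : (p : K) ≠ 0)
    (hbound : ((p : ℤ) ^ n - 1) * u < p ^ n * vK (p : K))
    (ω : K) (hω : ω ^ p ^ n = ω) :
    let S : L := ∑ r ∈ Finset.range n, (algebraMap K L ω * x) ^ p ^ r
    let f : Polynomial L := (C S + X) ^ p - (C S + X) - C (algebraMap K L (ω * τ))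
    (∀ m : ℕ, (f - (X ^ p - X)).coeff m = 0 ∨ 0 < v ((f - (X ^ p - X)).coeff m)) ∧
    ∃ T : Finset L, T.card = p ∧ ∀ z ∈ T,
      (S + z) ^ p - (S + z) - algebraMap K L (ω * τ) = 0 := by
  intro S f
  have : Fact p.Prime := ⟨hp⟩
  have := hres
  set w : AddValuation L (WithTop ℤ) := intAddValuation v hmul hadd
  have hwK : ∀ a : K, a ≠ 0 → w (algebraMap K L a) = ((p ^ n * vK a : ℤ) : WithTop ℤ) :=
    fun a ha => by rw [intAddValuation_apply v hmul hadd ((_root_.map_ne_zero _).mpr ha), hext a ha]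
  have hwp : ((p ^ n * vK p : ℤ) : WithTop ℤ) ≤ w p := by rw [← hwK _ hKp, map_natCast]
  have hN : 2 ≤ p ^ n := hp.two_le.trans (Nat.le_self_pow (by omega) p)
  have ht : ∀ r, ((-(p ^ r * u) : ℤ) : WithTop ℤ) ≤ w ((algebraMap K L ω * x) ^ p ^ r) :=
    fun r => by
      simpa using w.coe_le_map_mul_pow u.cast_nonneg hN (by rw [← map_pow, hω])
        (by rw [hx, hwK τ hτ0, hvτ]; push_cast; rfl) (p ^ r)
  have hsum : ∑ r ∈ Finset.range n, ((algebraMap K L ω * x) ^ p ^ r) ^ p =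
      S + algebraMap K L (ω * τ) := by
    have := sum_range_pow_pow_pow_sub_sum (algebraMap K L ω * x) p n
    rw [mul_pow, ← map_pow, hω] at this
    rw [map_mul, ← hx]
    linear_combination this
  obtain ⟨n, rfl⟩ : ∃ m, n = m + 1 := ⟨n - 1, by omega⟩
  have hcong := w.pos_map_coeff_C_add_X_pow_sub_sub_C_sub u.cast_nonneg ht hwp hbound hsum
  refine ⟨fun m => (intAddValuation_pos_iff v hmul hadd).mp (hcong m), ?_⟩
  obtain ⟨T, hT, hroots⟩ := O.exists_finset_roots_of_coeff_sub_X_pow_sub_X_pos w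
    (fun z => (hO z).trans (intAddValuation_nonneg_iff v hmul hadd).symm)
    (monic_C_add_X_pow_sub_sub_C _ _ hp.one_lt) hcong
  exact ⟨T, hT, fun z hz => by simpa [f, -map_sum] using hroots z hz⟩

/-- Abrashkin's elementary extensions: `K_n = K₀(x)` with `x^{p^n} - x = τ ∈ K₀`,
`v₀(τ) = -u > -p^n v₀(p)/(p^n-1)`, `gcd(u,p) = 1`, a totally ramified elementary abelian
extension of degree `p^n` (the valuations `v₀` on `K₀` and `v` on `K_n`, normalized with
`v ∘ algebraMap = p^n · v₀`, are encoded abstractly).  For a Teichmüller representative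
`ω` (`ω^{p^n} = ω`), with `S = ∑_{r=0}^{n-1} (ωx)^{p^r}`, the polynomial
`f(Y) = (S+Y)^p - (S+Y) - ωτ` is congruent to `Y^p - Y` modulo the maximal ideal of
`𝒪_{K_n}`, and hence (by Hensel's lemma in the henselian valuation ring `O`) has `p`
roots in `K_n`; in particular `z^p - z = ωτ` is solvable in `K_n`. -/
theorem stmt14 (p n : ℕ) (hp : p.Prime) (hn : 1 ≤ n)
    (K L : Type*) [Field K] [Field L] [Algebra K L]
    (vK : K → ℤ) (v : L → ℤ)
    (hmulK : ∀ a b : K, a ≠ 0 → b ≠ 0 → vK (a * b) = vK a + vK b)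
    (hmul : ∀ a b : L, a ≠ 0 → b ≠ 0 → v (a * b) = v a + v b)
    (hadd : ∀ a b : L, a ≠ 0 → b ≠ 0 → a + b ≠ 0 → min (v a) (v b) ≤ v (a + b))
    (hsurj : ∀ mz : ℤ, ∃ a : L, a ≠ 0 ∧ v a = mz)
    (hext : ∀ a : K, a ≠ 0 → v (algebraMap K L a) = p ^ n * vK a)
    (O : ValuationSubring L) [HenselianLocalRing O]
    (hO : ∀ z : L, z ∈ O ↔ z = 0 ∨ 0 ≤ v z)
    (hres : CharP (IsLocalRing.ResidueField O) p)
    (τ : K) (x : L) (u : ℕ) (hu : 0 < u) (hcop : ¬ p ∣ u)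
    (hτ0 : τ ≠ 0) (hvτ : vK τ = -(u : ℤ))
    (hx : x ^ p ^ n - x = algebraMap K L τ)
    (hKp : (p : K) ≠ 0)
    (hbound : ((p : ℤ) ^ n - 1) * u < p ^ n * vK (p : K))
    (ω : K) (hω : ω ^ p ^ n = ω) :
    let S : L := ∑ r ∈ Finset.range n, (algebraMap K L ω * x) ^ p ^ r
    let f : Polynomial L := (C S + X) ^ p - (C S + X) - C (algebraMap K L (ω * τ))
    (∀ m : ℕ, (f - (X ^ p - X)).coeff m = 0 ∨ 0 < v ((f - (X ^ p - X)).coeff m)) ∧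
    ∃ T : Finset L, T.card = p ∧ ∀ z ∈ T,
      (S + z) ^ p - (S + z) - algebraMap K L (ω * τ) = 0 :=
  stmt14_general p n hp hn K L vK v hmul hadd hext O hO hres τ x u hτ0 hvτ hx hKp hbound ω hω
end

section
/- Let 𝒪 be a discrete valuation ring with valuation v, residue characteristic p, and let Ω ∈ Frac(𝒪) with v(Ω) ≤ 0, set y = Ω^{1-p} (so v(y) ≥ 0), and suppose v(p) ≥ p^{t-1} v(y) for an integer t ≥ 1. Then ℘(Ω)^{p^t} - ℘(Ω^{p^t}) ∈ p·Ω^{p^{t-1}(p^2 - p + 1)}·𝒪, where ℘(z) = z^p - z. -/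
/-!
Put `y = Ω^{1-p}`. Since `Ω^p y = Ω`, one has
`℘(Ω)^{p^t} - ℘(Ω^{p^t}) = Ω^{p^{t+1}} ((1 - y)^{p^t} - 1 + y^{p^t})`, and
`Ω^{p^{t+1}} y^{p^{t-1}} = Ω^{p^{t-1}(p²-p+1)}`, so it suffices to show that `p y^{p^{t-1}}`
divides `(1 - y)^{p^t} - 1 + y^{p^t}` in the valuation ring `𝒪`, where `y` lies because
`v(Ω) ≤ 0`. The hypothesis on `v(p)` says that `y^{p^{t-1}}` divides `p` in `𝒪`, and under that
assumption the divisibility holds in every commutative ring: in the binomial expansion the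
coefficient `C(p^t, k)` of `y^k`, `0 < k < p^t`, is divisible by `p`, and even by `p²` when
`k < p^{t-1}`, while the extreme terms leave `((-1)^{p^t} + 1) y^{p^t}`, a multiple of `p`.
-/

open Finset WithZero

theorem Nat.Prime.sq_dvd_choose_prime_pow {p t k : ℕ} (hp : p.Prime) (hk0 : k ≠ 0)
    (hk : k < p ^ (t - 1)) : p ^ 2 ∣ (p ^ t).choose k := by
  have hkt : k ≤ p ^ t := hk.le.trans (Nat.pow_le_pow_right hp.pos (Nat.sub_le t 1))
  have hv : k.factorization p < t - 1 :=
    (Nat.pow_lt_pow_iff_right hp.one_lt).1 ((Nat.ordProj_le p hk0).trans_lt hk)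
  rw [hp.pow_dvd_iff_le_factorization (Nat.choose_pos hkt).ne',
    Nat.factorization_choose_prime_pow hp hkt hk0]
  omega

theorem Int.prime_dvd_neg_one_pow_prime_pow_add_one {p : ℕ} (hp : p.Prime) (t : ℕ) :
    (p : ℤ) ∣ (-1) ^ p ^ t + 1 := by
  have := Fact.mk hp
  rw [← ZMod.intCast_zmod_eq_zero_iff_dvd]
  push_cast
  rw [ZMod.pow_card_pow]
  ring

section CommRing

variable {R : Type*} [CommRing R]

theorem one_sub_pow_sub_one_add_pow_eq {n : ℕ} (hn : n ≠ 0) (y : R) :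
    (1 - y) ^ n - 1 + y ^ n =
      ∑ i ∈ range (n - 1), (-y) ^ (i + 1) * n.choose (i + 1) + ((-1) ^ n + 1) * y ^ n := by
  obtain ⟨m, rfl⟩ := Nat.exists_eq_add_one_of_ne_zero hn
  rw [sub_eq_neg_add 1 y, add_pow, sum_range_succ, sum_range_succ', Nat.add_sub_cancel]
  simp only [one_pow, mul_one, Nat.choose_self, Nat.choose_zero_right]
  push_cast
  ring

variable {p t : ℕ} {y : R}

theorem mul_pow_dvd_pow_mul_choose (hp : p.Prime) (hy : y ^ p ^ (t - 1) ∣ (p : R)) {k : ℕ}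
    (hk0 : k ≠ 0) (hk : k < p ^ t) : (p : R) * y ^ p ^ (t - 1) ∣ y ^ k * (p ^ t).choose k := by
  rcases lt_or_ge k (p ^ (t - 1)) with hkA | hAk
  · have hsq : (p : R) * p ∣ (p ^ t).choose k := by
      rw [← sq]
      exact_mod_cast Nat.cast_dvd_cast (hp.sq_dvd_choose_prime_pow hk0 hkA)
    exact dvd_mul_of_dvd_right ((mul_dvd_mul_left _ hy).trans hsq) _
  · rw [mul_comm]
    exact mul_dvd_mul (pow_dvd_pow y hAk)
      (by exact_mod_cast Nat.cast_dvd_cast (hp.dvd_choose_pow hk0 hk.ne))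

theorem mul_pow_dvd_one_sub_pow_sub_one_add_pow (hp : p.Prime)
    (hy : y ^ p ^ (t - 1) ∣ (p : R)) :
    (p : R) * y ^ p ^ (t - 1) ∣ (1 - y) ^ p ^ t - 1 + y ^ p ^ t := by
  rw [one_sub_pow_sub_one_add_pow_eq (pow_ne_zero t hp.ne_zero)]
  refine dvd_add (dvd_sum fun i hi => ?_) ?_
  · rw [mem_range] at hi
    rw [neg_pow, mul_assoc]
    exact (mul_pow_dvd_pow_mul_choose hp hy i.succ_ne_zero (by omega)).mul_left _
  · refine mul_dvd_mul ?_ (pow_dvd_pow y (Nat.pow_le_pow_right hp.pos (Nat.sub_le t 1)))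
    exact_mod_cast Int.cast_dvd_cast _ _ (Int.prime_dvd_neg_one_pow_prime_pow_add_one hp t)

def artinSchreier (p : ℕ) (z : R) : R := z ^ p - z

theorem artinSchreier_pow_sub_artinSchreier_pow {ω : R} (h : ω ^ p * y = ω) (n : ℕ) :
    artinSchreier p ω ^ n - artinSchreier p (ω ^ n) =
      (ω ^ p) ^ n * ((1 - y) ^ n - 1 + y ^ n) := by
  have h₁ : artinSchreier p ω = ω ^ p * (1 - y) := by
    rw [artinSchreier]
    linear_combination h
  have h₂ : ω ^ n = (ω ^ p) ^ n * y ^ n := by rw [← mul_pow, h]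
  rw [h₁, artinSchreier, ← pow_mul, mul_comm n p, pow_mul, mul_pow, h₂]
  ring

end CommRing

theorem pow_pow_mul_inv_pow_pow {K : Type*} [Field K] {ω : K} (hω : ω ≠ 0) {p t : ℕ}
    (hp : 1 ≤ p) (ht : 1 ≤ t) :
    (ω ^ p) ^ p ^ t * ((ω ^ (p - 1))⁻¹) ^ p ^ (t - 1) = ω ^ (p ^ (t - 1) * (p ^ 2 - p + 1)) := by
  obtain ⟨s, rfl⟩ := Nat.exists_eq_add_of_le' ht
  rw [inv_pow, mul_inv_eq_iff_eq_mul₀ (by positivity), ← pow_mul, ← pow_mul, ← pow_add]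
  congr 1
  have : p ≤ p ^ 2 := Nat.le_self_pow two_ne_zero p
  zify [hp, this]
  simp only [Nat.add_sub_cancel]
  ring

namespace Valuation

variable {F : Type*} [Field F] (v : F → ℤ)
  (hmul : ∀ a b : F, a ≠ 0 → b ≠ 0 → v (a * b) = v a + v b)
  (hadd : ∀ a b : F, a ≠ 0 → b ≠ 0 → a + b ≠ 0 → min (v a) (v b) ≤ v (a + b))

open Classical in
noncomputable def ofInt : Valuation F ℤᵐ⁰ where
  toFun x := if x = 0 then 0 else exp (-v x)
  map_zero' := if_pos rfl
  map_one' := by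
    have h := hmul 1 1 one_ne_zero one_ne_zero
    rw [mul_one] at h
    simp [show v 1 = 0 by omega]
  map_mul' a b := by
    by_cases ha : a = 0
    · simp [ha]
    by_cases hb : b = 0
    · simp [hb]
    simp only [mul_eq_zero, ha, hb, or_self, if_false, hmul a b ha hb, neg_add, exp_add]
  map_add_le_max' a b := by
    by_cases ha : a = 0
    · simp [ha]
    by_cases hb : b = 0
    · simp [hb]
    by_cases hab : a + b = 0
    · simp [hab]
    simp only [ha, hb, hab, if_false, le_max_iff, exp_le_exp]
    have := hadd a b ha hb hab
    omega

theorem ofInt_apply {x : F} (hx : x ≠ 0) : ofInt v hmul hadd x = exp (-v x) := if_neg hx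

theorem mem_integer_ofInt {x : F} : x ∈ (ofInt v hmul hadd).integer ↔ x = 0 ∨ 0 ≤ v x := by
  rw [mem_integer_iff]
  by_cases hx : x = 0
  · simp [hx]
  · rw [ofInt_apply v hmul hadd hx, ← exp_zero, exp_le_exp]
    simp [hx]

end Valuation

/-- Let `F` be the fraction field of a discrete valuation ring with valuation `v`
(elements of the valuation ring being those `x` with `x = 0` or `v x ≥ 0`), of residue
characteristic `p`.  Let `Ω ∈ F` with `v(Ω) ≤ 0`, set `y = Ω^{1-p}` (so `v(y) ≥ 0`), and
suppose `v(p) ≥ p^{t-1} v(y)` for an integer `t ≥ 1`.  Then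
`℘(Ω)^{p^t} - ℘(Ω^{p^t}) ∈ p · Ω^{p^{t-1}(p²-p+1)} · 𝒪`, where `℘(z) = z^p - z`. -/
theorem stmt18 (p t : ℕ) (hp : p.Prime) (ht : 1 ≤ t)
    {F : Type*} [Field F] (v : F → ℤ)
    (hmul : ∀ a b : F, a ≠ 0 → b ≠ 0 → v (a * b) = v a + v b)
    (hadd : ∀ a b : F, a ≠ 0 → b ≠ 0 → a + b ≠ 0 → min (v a) (v b) ≤ v (a + b))
    (Ω : F) (hΩ0 : Ω ≠ 0) (hvΩ : v Ω ≤ 0) (hpF : (p : F) ≠ 0)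
    (hkey : (p : ℤ) ^ (t - 1) * (((p : ℤ) - 1) * (-(v Ω))) ≤ v (p : F)) :
    ∃ c : F, (c = 0 ∨ 0 ≤ v c) ∧
      (Ω ^ p - Ω) ^ p ^ t - ((Ω ^ p ^ t) ^ p - Ω ^ p ^ t)
        = (p : F) * Ω ^ (p ^ (t - 1) * (p ^ 2 - p + 1)) * c := by
  set w := Valuation.ofInt v hmul hadd
  have hwy : w (Ω ^ (p - 1))⁻¹ = exp (((p - 1 : ℕ) : ℤ) * v Ω) := by
    rw [map_inv₀, map_pow, Valuation.ofInt_apply v hmul hadd hΩ0, ← exp_nsmul, ← exp_neg,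
      nsmul_eq_mul, mul_neg, neg_neg]
  let y : w.integer := ⟨(Ω ^ (p - 1))⁻¹, by
    rw [Valuation.mem_integer_iff, hwy, ← exp_zero, exp_le_exp]
    exact mul_nonpos_of_nonneg_of_nonpos (by positivity) hvΩ⟩
  have hy : y ^ p ^ (t - 1) ∣ (p : w.integer) := by
    rw [(Valuation.integer.integers w).dvd_iff_le, map_natCast, map_pow, map_pow,
      show algebraMap w.integer F y = (Ω ^ (p - 1))⁻¹ from rfl, hwy,
      Valuation.ofInt_apply v hmul hadd hpF, ← exp_nsmul, exp_le_exp, nsmul_eq_mul,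
      Nat.cast_sub hp.one_le]
    push_cast
    linarith
  obtain ⟨c, hc⟩ := mul_pow_dvd_one_sub_pow_sub_one_add_pow hp hy
  refine ⟨c, (Valuation.mem_integer_ofInt v hmul hadd).1 c.2, ?_⟩
  have hΩy : Ω ^ p * (Ω ^ (p - 1))⁻¹ = Ω := by
    rw [mul_inv_eq_iff_eq_mul₀ (pow_ne_zero _ hΩ0), ← pow_succ', Nat.sub_add_cancel hp.one_le]
  have hc' := congrArg Subtype.val hc
  push_cast at hc'
  change artinSchreier p Ω ^ p ^ t - artinSchreier p (Ω ^ p ^ t) = _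
  rw [artinSchreier_pow_sub_artinSchreier_pow hΩy, hc',
    ← pow_pow_mul_inv_pow_pow hΩ0 hp.one_le ht]
  ring
end
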